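/- arXiv:2504.10759 — 2 statements merged into one kernel-verified Lean document; each statement's English description precedes it below -/
import Mathlib

section
/- Let F₅, F₆, F₇, F₈ ∈ ℂ be pairwise distinct. Define r₁ = (F₅−F₇)(F₅−F₆), r₂ = (F₅−F₈)(F₅−F₆), r₃ = (F₅−F₈)(F₅−F₇). Then the discriminant ∏_{i<j}(rᵢ−rⱼ)² of the cubic ∏ᵢ(t+rᵢ) equals ∏_{5≤i<j≤8}(Fᵢ−Fⱼ)². -/
/-- with `r₁ = (F₅−F₇)(F₅−F₆)`, `r₂ = (F₅−F₈)(F₅−F₆)`,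
`r₃ = (F₅−F₈)(F₅−F₇)`, the discriminant `∏_{i<j}(rᵢ−rⱼ)²` of the cubic
`∏ᵢ(t+rᵢ)` equals `∏_{5≤i<j≤8}(Fᵢ−Fⱼ)²`. -/
theorem fourfold_point_discriminant (F5 F6 F7 F8 : ℂ)
    (h56 : F5 ≠ F6) (h57 : F5 ≠ F7) (h58 : F5 ≠ F8)
    (h67 : F6 ≠ F7) (h68 : F6 ≠ F8) (h78 : F7 ≠ F8) :
    ((F5 - F7) * (F5 - F6) - (F5 - F8) * (F5 - F6)) ^ 2 *
      ((F5 - F7) * (F5 - F6) - (F5 - F8) * (F5 - F7)) ^ 2 *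
      ((F5 - F8) * (F5 - F6) - (F5 - F8) * (F5 - F7)) ^ 2 =
    (F5 - F6) ^ 2 * (F5 - F7) ^ 2 * (F5 - F8) ^ 2 *
      (F6 - F7) ^ 2 * (F6 - F8) ^ 2 * (F7 - F8) ^ 2 := by
  ring
end

section
/- Fix parameters A₀, A₁ ∈ ℂ with A₀, A₁, A₀−A₁ all nonzero. Consider the rational function in p₀, p₁, l: C₁ = (A₀p₀ − A₀p₁ + A₁p₁)(lp₁² + p₀² − p₀p₁) / (p₀²(A₁lp₁ + A₀p₀ − A₀p₁)), and the rational function in q₀, q₁, l: C₂ = (q₀ − q₁)(A₀²lq₁² − A₀A₁q₀q₁ + A₁²q₀²) / (q₀²(A₀lq₁ − A₁lq₁ − A₀q₁ + A₁q₀)A₁). Then substituting (p₀, p₁, q₀, q₁, A₀, A₁) ↦ (q₀, q₁, A₀p₀, (A₀−A₁)p₁, A₀, A₀−A₁) into C₂ yields C₁, as an identity of rational functions. -/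
/-- substituting `(p₀,p₁,q₀,q₁,A₀,A₁) ↦ (q₀,q₁,A₀p₀,(A₀−A₁)p₁,A₀,A₀−A₁)`
into the cross-ratio `C₂ = (q₀−q₁)(A₀²lq₁²−A₀A₁q₀q₁+A₁²q₀²)/(q₀²(A₀lq₁−A₁lq₁−A₀q₁+A₁q₀)A₁)`
yields the cross-ratio
`C₁ = (A₀p₀−A₀p₁+A₁p₁)(lp₁²+p₀²−p₀p₁)/(p₀²(A₁lp₁+A₀p₀−A₀p₁))`,
as an identity of rational functions. -/
theorem cross_ratio_substitution (A0 A1 : ℂ)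
    (h0 : A0 ≠ 0) (h1 : A1 ≠ 0) (h01 : A0 - A1 ≠ 0)
    (p0 p1 l : ℂ) (hp0 : p0 ≠ 0)
    (hden : A1 * l * p1 + A0 * p0 - A0 * p1 ≠ 0) :
    (A0 * p0 - (A0 - A1) * p1) *
        (A0 ^ 2 * l * ((A0 - A1) * p1) ^ 2 -
          A0 * (A0 - A1) * (A0 * p0) * ((A0 - A1) * p1) +
          (A0 - A1) ^ 2 * (A0 * p0) ^ 2) /
        ((A0 * p0) ^ 2 *
          (A0 * l * ((A0 - A1) * p1) - (A0 - A1) * l * ((A0 - A1) * p1) -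
            A0 * ((A0 - A1) * p1) + (A0 - A1) * (A0 * p0)) * (A0 - A1)) =
      (A0 * p0 - A0 * p1 + A1 * p1) * (l * p1 ^ 2 + p0 ^ 2 - p0 * p1) /
        (p0 ^ 2 * (A1 * l * p1 + A0 * p0 - A0 * p1)) := by
  have hfac : A0 * l * ((A0 - A1) * p1) - (A0 - A1) * l * ((A0 - A1) * p1) -
      A0 * ((A0 - A1) * p1) + (A0 - A1) * (A0 * p0) =
      (A0 - A1) * (A1 * l * p1 + A0 * p0 - A0 * p1) := by ring
  rw [hfac]
  field_simp
  ring
end
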